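/- arXiv:math/0310096 — 2 statements merged into one kernel-verified Lean document; each statement's English description precedes it below -/
import Mathlib

section
/- If V and W are solvable ideals of a Bol algebra B over a field K of characteristic 0, then V + W is a solvable ideal of B. -/
/-- A Bol algebra structure on a `K`-vector space `V`: a bilinear operation `mul`
and a trilinear operation `tri` satisfying the Bol algebra identities. -/
structure BolStr (K V : Type*) [Field K] [AddCommGroup V] [Module K V] where
  mul : V →ₗ[K] V →ₗ[K] V
  tri : V →ₗ[K] V →ₗ[K] V →ₗ[K] V
  mul_self : ∀ x, mul x x = 0
  tri_right : ∀ x y, tri x y y = 0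
  tri_cyclic : ∀ x y z, tri x y z + tri y z x + tri z x y = 0
  bol_iv : ∀ x y z w,
    mul (tri x y z) w - mul (tri x y w) z + tri z w (mul x y)
      - tri x y (mul z w) + mul (mul x y) (mul z w) = 0
  bol_v : ∀ x y z w v,
    tri x y (tri z w v)
      = tri (tri x y z) w v + tri z (tri x y w) v + tri z w (tri x y v)

variable {K V : Type*} [Field K] [AddCommGroup V] [Module K V]

/-- The span of products `u·w`, `u ∈ U`, `w ∈ W`. -/
def sMul (A : BolStr K V) (U W : Submodule K V) : Submodule K V :=
  Submodule.span K {z | ∃ u ∈ U, ∃ w ∈ W, z = A.mul u w}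

/-- The span of triple products `(u,w,x)`, `u ∈ U`, `w ∈ W`, `x ∈ X`. -/
def sTri (A : BolStr K V) (U W X : Submodule K V) : Submodule K V :=
  Submodule.span K {z | ∃ u ∈ U, ∃ w ∈ W, ∃ x ∈ X, z = A.tri u w x}

/-- A subspace `W` is an ideal of the Bol algebra if `W·B ⊆ W` and `(W,B,B) ⊆ W`. -/
def IsBolIdeal (A : BolStr K V) (W : Submodule K V) : Prop :=
  sMul A W ⊤ ≤ W ∧ sTri A W ⊤ ⊤ ≤ W

/-- The derived series of an ideal: `W⁽⁰⁾ = W`,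
`W⁽ⁿ⁺¹⁾ = W⁽ⁿ⁾·W⁽ⁿ⁾ + (W⁽ⁿ⁾,W⁽ⁿ⁾,B)`. -/
def derSeries (A : BolStr K V) (W : Submodule K V) : ℕ → Submodule K V
  | 0 => W
  | n + 1 => sMul A (derSeries A W n) (derSeries A W n)
      ⊔ sTri A (derSeries A W n) (derSeries A W n) ⊤

/-- An ideal `W` is solvable if its derived series reaches `0`. -/
def IsSolvableIdeal (A : BolStr K V) (W : Submodule K V) : Prop :=
  ∃ k : ℕ, derSeries A W k = ⊥

/-! ### Auxiliary lemmas -/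

lemma BolStr.mul_anti (A : BolStr K V) (x y : V) : A.mul x y = - A.mul y x := by
  have h := A.mul_self (x + y)
  simp only [map_add, LinearMap.add_apply, A.mul_self, zero_add, add_zero] at h
  exact eq_neg_of_add_eq_zero_right h

lemma BolStr.tri_anti (A : BolStr K V) (x y z : V) : A.tri x y z = - A.tri x z y := by
  have h := A.tri_right x (y + z)
  simp only [map_add, LinearMap.add_apply, A.tri_right, zero_add, add_zero] at h
  exact eq_neg_of_add_eq_zero_right h

lemma mem_sMul (A : BolStr K V) {U W : Submodule K V} {u w : V}
    (hu : u ∈ U) (hw : w ∈ W) : A.mul u w ∈ sMul A U W :=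
  Submodule.subset_span ⟨u, hu, w, hw, rfl⟩

lemma mem_sTri (A : BolStr K V) {U W X : Submodule K V} {u w x : V}
    (hu : u ∈ U) (hw : w ∈ W) (hx : x ∈ X) : A.tri u w x ∈ sTri A U W X :=
  Submodule.subset_span ⟨u, hu, w, hw, x, hx, rfl⟩

lemma sMul_le {A : BolStr K V} {U W P : Submodule K V}
    (h : ∀ u ∈ U, ∀ w ∈ W, A.mul u w ∈ P) : sMul A U W ≤ P := by
  rw [sMul, Submodule.span_le]
  rintro z ⟨u, hu, w, hw, rfl⟩
  exact h u hu w hw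

lemma sTri_le {A : BolStr K V} {U W X P : Submodule K V}
    (h : ∀ u ∈ U, ∀ w ∈ W, ∀ x ∈ X, A.tri u w x ∈ P) : sTri A U W X ≤ P := by
  rw [sTri, Submodule.span_le]
  rintro z ⟨u, hu, w, hw, x, hx, rfl⟩
  exact h u hu w hw x hx

lemma sMul_mono {A : BolStr K V} {U U' W W' : Submodule K V}
    (hU : U ≤ U') (hW : W ≤ W') : sMul A U W ≤ sMul A U' W' :=
  sMul_le fun u hu w hw => mem_sMul A (hU hu) (hW hw)

lemma sTri_mono {A : BolStr K V} {U U' W W' X X' : Submodule K V}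
    (hU : U ≤ U') (hW : W ≤ W') (hX : X ≤ X') : sTri A U W X ≤ sTri A U' W' X' :=
  sTri_le fun u hu w hw x hx => mem_sTri A (hU hu) (hW hw) (hX hx)

/-- The "core" of an ideal: products with one factor in `I`. It is contained in `I`
and is a *strong* ideal: stable under `tri` in every slot. -/
def bolCore (A : BolStr K V) (I : Submodule K V) : Submodule K V :=
  sMul A I ⊤ ⊔ sTri A I ⊤ ⊤

lemma bolCore_le {A : BolStr K V} {I : Submodule K V} (hI : IsBolIdeal A I) :
    bolCore A I ≤ I := sup_le hI.1 hI.2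

lemma mul_mem_core (A : BolStr K V) {I : Submodule K V} {u : V} (hu : u ∈ I) (w : V) :
    A.mul u w ∈ bolCore A I :=
  Submodule.mem_sup_left (mem_sMul A hu Submodule.mem_top)

lemma tri_mem_core (A : BolStr K V) {I : Submodule K V} {x : V} (hx : x ∈ I) (y z : V) :
    A.tri x y z ∈ bolCore A I :=
  Submodule.mem_sup_right (mem_sTri A hx Submodule.mem_top Submodule.mem_top)

/-- Key lemma: the middle slot of `tri` preserves `bolCore` (uses Bol identities (iv), (v)
and characteristic zero). -/
lemma tri_mid_mem_core [CharZero K] (A : BolStr K V) {I : Submodule K V}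
    (hI : IsBolIdeal A I) {p : V} (hp : p ∈ bolCore A I) (a b : V) :
    A.tri a p b ∈ bolCore A I := by
  let S : Submodule K V :=
    { carrier := {q | ∀ a b : V, A.tri a q b ∈ bolCore A I}
      add_mem' := by
        intro q r hq hr a b
        have h : A.tri a (q + r) b = A.tri a q b + A.tri a r b := by
          simp only [map_add, LinearMap.add_apply]
        rw [h]; exact add_mem (hq a b) (hr a b)
      zero_mem' := by
        intro a b
        have h : A.tri a (0 : V) b = 0 := by simp
        rw [h]; exact zero_mem _
      smul_mem' := by
        intro c q hq a b
        have h : A.tri a (c • q) b = c • A.tri a q b := by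
          simp only [map_smul, LinearMap.smul_apply]
        rw [h]; exact Submodule.smul_mem _ _ (hq a b) }
  have hcore : bolCore A I ≤ S := by
    apply sup_le
    · apply sMul_le
      intro u hu w _
      intro a b
      show A.tri a (A.mul u w) b ∈ bolCore A I
      have hrw : A.tri a (A.mul u w) b = - A.tri a b (A.mul u w) :=
        A.tri_anti a (A.mul u w) b
      have hiv := A.bol_iv u w a b
      have h3 : A.tri a b (A.mul u w) =
          A.mul (A.tri u w b) a - A.mul (A.tri u w a) b
          + A.tri u w (A.mul a b) - A.mul (A.mul u w) (A.mul a b) := by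
        rw [← sub_eq_zero, ← hiv]; abel
      rw [hrw, h3]
      refine neg_mem (sub_mem (add_mem (sub_mem ?_ ?_) ?_) ?_)
      · exact mul_mem_core A (hI.2 (mem_sTri A hu Submodule.mem_top Submodule.mem_top)) a
      · exact mul_mem_core A (hI.2 (mem_sTri A hu Submodule.mem_top Submodule.mem_top)) b
      · exact tri_mem_core A hu _ _
      · exact mul_mem_core A (hI.1 (mem_sMul A hu Submodule.mem_top)) _
    · apply sTri_le
      intro x hx y _ w _
      intro a b
      show A.tri a (A.tri x y w) b ∈ bolCore A I
      have hswap : ∀ c d e : V, A.tri a (A.tri x c d) e = - A.tri a (A.tri x d c) e := by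
        intro c d e
        rw [A.tri_anti x c d]
        simp only [map_neg, LinearMap.neg_apply]
      have hsym : ∀ c d e : V,
          A.tri a (A.tri x c d) e - A.tri a (A.tri x c e) d ∈ bolCore A I := by
        intro c d e
        have hv := A.bol_v x c a d e
        have han : A.tri a d (A.tri x c e) = - A.tri a (A.tri x c e) d :=
          A.tri_anti a d (A.tri x c e)
        rw [han] at hv
        have hz : A.tri (A.tri x c a) d e + A.tri a (A.tri x c d) e
            + -(A.tri a (A.tri x c e) d) - A.tri x c (A.tri a d e) = 0 := by
          rw [sub_eq_zero]; exact hv.symm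
        have key : A.tri a (A.tri x c d) e - A.tri a (A.tri x c e) d =
            A.tri x c (A.tri a d e) - A.tri (A.tri x c a) d e := by
          rw [← sub_eq_zero, ← hz]; abel
        rw [key]
        exact sub_mem (tri_mem_core A hx _ _)
          (tri_mem_core A (hI.2 (mem_sTri A hx Submodule.mem_top Submodule.mem_top)) _ _)
      have h2g : A.tri a (A.tri x y w) b + A.tri a (A.tri x y w) b =
          (A.tri a (A.tri x y w) b - A.tri a (A.tri x y b) w)
          - (A.tri a (A.tri x b y) w - A.tri a (A.tri x b w) y)
          + (A.tri a (A.tri x w b) y - A.tri a (A.tri x w y) b) := by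
        rw [hswap y b w, hswap b w y, hswap w y b]; abel
      have hmem2 : A.tri a (A.tri x y w) b + A.tri a (A.tri x y w) b ∈ bolCore A I := by
        rw [h2g]
        exact add_mem (sub_mem (hsym y w b) (hsym b y w)) (hsym w b y)
      have h12 : A.tri a (A.tri x y w) b =
          (2⁻¹ : K) • (A.tri a (A.tri x y w) b + A.tri a (A.tri x y w) b) := by
        rw [← two_smul K, smul_smul, inv_mul_cancel₀ (two_ne_zero), one_smul]
      rw [h12]
      exact Submodule.smul_mem _ _ hmem2
  exact hcore hp a b

lemma derSeries_succ (A : BolStr K V) (W : Submodule K V) (n : ℕ) :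
    derSeries A W (n + 1) = sMul A (derSeries A W n) (derSeries A W n)
      ⊔ sTri A (derSeries A W n) (derSeries A W n) ⊤ := rfl

lemma derSeries_mono (A : BolStr K V) {U W : Submodule K V} (h : U ≤ W) :
    ∀ n, derSeries A U n ≤ derSeries A W n := by
  intro n
  induction n with
  | zero => exact h
  | succ n ih =>
    rw [derSeries_succ, derSeries_succ]
    exact sup_le_sup (sMul_mono ih ih) (sTri_mono ih ih le_rfl)

lemma derSeries_add (A : BolStr K V) (W : Submodule K V) (m n : ℕ) :
    derSeries A W (m + n) = derSeries A (derSeries A W m) n := by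
  induction n with
  | zero => rfl
  | succ n ih => rw [← Nat.add_assoc, derSeries_succ, derSeries_succ, ih]

lemma derSeries_core_sup_le [CharZero K] (A : BolStr K V) {I : Submodule K V}
    (hI : IsBolIdeal A I) (W : Submodule K V) :
    ∀ n, derSeries A (bolCore A I ⊔ W) n ≤ bolCore A I ⊔ derSeries A W n := by
  intro n
  induction n with
  | zero => exact le_rfl
  | succ n ih =>
    rw [derSeries_succ, derSeries_succ]
    apply sup_le
    · refine le_trans (sMul_mono ih ih) (sMul_le ?_)
      intro u hu w hw
      obtain ⟨u1, hu1, u2, hu2, rfl⟩ := Submodule.mem_sup.mp hu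
      obtain ⟨w1, hw1, w2, hw2, rfl⟩ := Submodule.mem_sup.mp hw
      have expand : A.mul (u1 + u2) (w1 + w2) =
          A.mul u1 w1 + A.mul u1 w2 + A.mul u2 w1 + A.mul u2 w2 := by
        simp only [map_add, LinearMap.add_apply]; abel
      rw [expand]
      refine add_mem (add_mem (add_mem ?_ ?_) ?_) ?_
      · exact Submodule.mem_sup_left (mul_mem_core A (bolCore_le hI hu1) w1)
      · exact Submodule.mem_sup_left (mul_mem_core A (bolCore_le hI hu1) w2)
      · refine Submodule.mem_sup_left ?_
        rw [A.mul_anti u2 w1]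
        exact neg_mem (mul_mem_core A (bolCore_le hI hw1) u2)
      · exact Submodule.mem_sup_right (Submodule.mem_sup_left (mem_sMul A hu2 hw2))
    · refine le_trans (sTri_mono ih ih le_rfl) (sTri_le ?_)
      intro u hu w hw b _
      obtain ⟨u1, hu1, u2, hu2, rfl⟩ := Submodule.mem_sup.mp hu
      obtain ⟨w1, hw1, w2, hw2, rfl⟩ := Submodule.mem_sup.mp hw
      have expand : A.tri (u1 + u2) (w1 + w2) b =
          A.tri u1 w1 b + A.tri u1 w2 b + A.tri u2 w1 b + A.tri u2 w2 b := by
        simp only [map_add, LinearMap.add_apply]; abel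
      rw [expand]
      refine add_mem (add_mem (add_mem ?_ ?_) ?_) ?_
      · exact Submodule.mem_sup_left (tri_mem_core A (bolCore_le hI hu1) w1 b)
      · exact Submodule.mem_sup_left (tri_mem_core A (bolCore_le hI hu1) w2 b)
      · exact Submodule.mem_sup_left (tri_mid_mem_core A hI hw1 u2 b)
      · exact Submodule.mem_sup_right
          (Submodule.mem_sup_right (mem_sTri A hu2 hw2 Submodule.mem_top))

lemma derSeries_sup_one_le (A : BolStr K V) (I J : Submodule K V) :
    derSeries A (I ⊔ J) 1 ≤ bolCore A I ⊔ bolCore A J := by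
  rw [derSeries_succ]
  apply sup_le
  · apply sMul_le
    intro u hu w _
    obtain ⟨i, hi, j, hj, rfl⟩ := Submodule.mem_sup.mp hu
    have h : A.mul (i + j) w = A.mul i w + A.mul j w := by
      simp only [map_add, LinearMap.add_apply]
    rw [h]
    exact add_mem (Submodule.mem_sup_left (mul_mem_core A hi w))
      (Submodule.mem_sup_right (mul_mem_core A hj w))
  · apply sTri_le
    intro u hu w _ x _
    obtain ⟨i, hi, j, hj, rfl⟩ := Submodule.mem_sup.mp hu
    have h : A.tri (i + j) w x = A.tri i w x + A.tri j w x := by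
      simp only [map_add, LinearMap.add_apply]
    rw [h]
    exact add_mem (Submodule.mem_sup_left (tri_mem_core A hi w x))
      (Submodule.mem_sup_right (tri_mem_core A hj w x))

/-- If `V` and `W` are solvable ideals of a Bol algebra `B` over a
field of characteristic zero, then `V + W` is a solvable ideal of `B`. -/
theorem sup_isSolvableIdeal [CharZero K] (A : BolStr K V)
    (I J : Submodule K V) (hI : IsBolIdeal A I) (hJ : IsBolIdeal A J)
    (hIs : IsSolvableIdeal A I) (hJs : IsSolvableIdeal A J) :
    IsBolIdeal A (I ⊔ J) ∧ IsSolvableIdeal A (I ⊔ J) := by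
  obtain ⟨kI, hkI⟩ := hIs
  obtain ⟨kJ, hkJ⟩ := hJs
  constructor
  · constructor
    · apply sMul_le
      intro u hu w _
      obtain ⟨i, hi, j, hj, rfl⟩ := Submodule.mem_sup.mp hu
      have h : A.mul (i + j) w = A.mul i w + A.mul j w := by
        simp only [map_add, LinearMap.add_apply]
      rw [h]
      exact add_mem
        (Submodule.mem_sup_left (hI.1 (mem_sMul A hi Submodule.mem_top)))
        (Submodule.mem_sup_right (hJ.1 (mem_sMul A hj Submodule.mem_top)))
    · apply sTri_le
      intro u hu w _ x _
      obtain ⟨i, hi, j, hj, rfl⟩ := Submodule.mem_sup.mp hu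
      have h : A.tri (i + j) w x = A.tri i w x + A.tri j w x := by
        simp only [map_add, LinearMap.add_apply]
      rw [h]
      exact add_mem
        (Submodule.mem_sup_left
          (hI.2 (mem_sTri A hi Submodule.mem_top Submodule.mem_top)))
        (Submodule.mem_sup_right
          (hJ.2 (mem_sTri A hj Submodule.mem_top Submodule.mem_top)))
  · refine ⟨1 + (kJ + kI), le_bot_iff.mp ?_⟩
    rw [derSeries_add]
    refine le_trans (derSeries_mono A (derSeries_sup_one_le A I J) _) ?_
    rw [derSeries_add]
    have h3 : derSeries A (bolCore A I ⊔ bolCore A J) kJ ≤ bolCore A I := by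
      refine le_trans (derSeries_core_sup_le A hI (bolCore A J) kJ) ?_
      have h4 : derSeries A (bolCore A J) kJ ≤ derSeries A J kJ :=
        derSeries_mono A (bolCore_le hJ) kJ
      rw [hkJ] at h4
      exact sup_le le_rfl (le_trans h4 bot_le)
    refine le_trans (derSeries_mono A h3 kI) ?_
    exact le_trans (derSeries_mono A (bolCore_le hI) kI) (le_of_eq hkI)
end

section
/- Let (G,B) be an enveloping pair for a Bol algebra B over a field K of characteristic 0, with G finite-dimensional. If the Killing form κ of G is nondegenerate (in particular, if G is a simple Lie algebra), then the Killing–Ricci form β of B, i.e., the restriction of κ to B, is nondegenerate. -/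
variable (K : Type*) {G : Type*} [Field K] [LieRing G] [LieAlgebra K G]

/-- The span of brackets `⁅u, w⁆`, `u ∈ U`, `w ∈ W`, for subspaces of a Lie algebra. -/
def lbrk (U W : Submodule K G) : Submodule K G :=
  Submodule.span K {z | ∃ u ∈ U, ∃ w ∈ W, z = ⁅u, w⁆}

/-- `(G, B)` is an enveloping pair for a Bol algebra: `G = B + [B,B]`,
`B ∩ [B,B] = 0` and `[B,[B,B]] ⊆ B`. -/
def IsEnvPair (B : Submodule K G) : Prop :=
  B ⊔ lbrk K B B = ⊤ ∧ B ⊓ lbrk K B B = ⊥ ∧ lbrk K B (lbrk K B B) ≤ B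

/-- `π` is the projection of `G` onto `B` along `[B,B]`. -/
def IsProjOntoB (B : Submodule K G) (π : G →ₗ[K] G) : Prop :=
  (∀ g, π g ∈ B) ∧ (∀ x ∈ B, π x = x) ∧ (∀ y ∈ lbrk K B B, π y = 0)

/-- The span of Bol products `ξ·η = π(⁅ξ,η⁆)` for `ξ ∈ U`, `η ∈ W`. -/
def bMul (π : G →ₗ[K] G) (U W : Submodule K G) : Submodule K G :=
  Submodule.span K {z | ∃ u ∈ U, ∃ w ∈ W, z = π ⁅u, w⁆}

/-- The span of Bol triple products `(ξ,η,ζ) = ⁅ζ,⁅ξ,η⁆⁆` for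
`ξ ∈ U`, `η ∈ W`, `ζ ∈ X`. -/
def bTri (U W X : Submodule K G) : Submodule K G :=
  Submodule.span K {z | ∃ u ∈ U, ∃ w ∈ W, ∃ x ∈ X, z = ⁅x, ⁅u, w⁆⁆}

/-- A subspace `V ⊆ B` is an ideal of the Bol algebra `B` if `V·B ⊆ V` and
`(V,B,B) ⊆ V`. -/
def IsBolIdealOf (B : Submodule K G) (π : G →ₗ[K] G) (V : Submodule K G) : Prop :=
  V ≤ B ∧ bMul K π V B ≤ V ∧ bTri K V B B ≤ V

/-- The derived series of a Bol ideal: `V⁽⁰⁾ = V`,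
`V⁽ⁿ⁺¹⁾ = V⁽ⁿ⁾·V⁽ⁿ⁾ + (V⁽ⁿ⁾,V⁽ⁿ⁾,B)`. -/
def bolDer (B : Submodule K G) (π : G →ₗ[K] G) (V : Submodule K G) :
    ℕ → Submodule K G
  | 0 => V
  | n + 1 => bMul K π (bolDer B π V n) (bolDer B π V n)
      ⊔ bTri K (bolDer B π V n) (bolDer B π V n) B

/-- The Lie derived series of a subspace: `W⁽⁰⁾ = W`, `W⁽ⁿ⁺¹⁾ = [W⁽ⁿ⁾, W⁽ⁿ⁾]`. -/
def lieDer (W : Submodule K G) : ℕ → Submodule K G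
  | 0 => W
  | n + 1 => lbrk K (lieDer W n) (lieDer W n)

/-!
The enveloping pair is a `ℤ/2`-grading `G = B ⊕ [B,B]` with `B` odd: the bracket of two odd
elements is even by definition, `[B,[B,B]] ⊆ B` by hypothesis, and `[[B,B],[B,B]] ⊆ [B,B]`
by the Jacobi identity.
For `ξ ∈ B` and `m ∈ [B,B]` the endomorphism `ad ξ ∘ ad m` is odd, so its trace `κ(ξ, m)`
vanishes. Hence `κ(ξ, B) = 0` forces `κ(ξ, G) = 0`, and `ξ = 0` since `κ` is nondegenerate.
-/

section Lbrk

variable {K}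

lemma lie_mem_lbrk {U W : Submodule K G} {u w : G} (hu : u ∈ U) (hw : w ∈ W) :
    ⁅u, w⁆ ∈ lbrk K U W :=
  Submodule.subset_span ⟨u, hu, w, hw, rfl⟩

lemma lbrk_le_iff {U W X : Submodule K G} :
    lbrk K U W ≤ X ↔ ∀ u ∈ U, ∀ w ∈ W, ⁅u, w⁆ ∈ X := by
  refine ⟨fun h u hu w hw => h (lie_mem_lbrk hu hw), fun h => Submodule.span_le.2 ?_⟩
  rintro _ ⟨u, hu, w, hw, rfl⟩
  exact h u hu w hw

lemma lbrk_mono {U U' W W' : Submodule K G} (hU : U ≤ U') (hW : W ≤ W') :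
    lbrk K U W ≤ lbrk K U' W' :=
  lbrk_le_iff.2 fun _ hu _ hw => lie_mem_lbrk (hU hu) (hW hw)

lemma lbrk_le_lbrk_swap (U W : Submodule K G) : lbrk K U W ≤ lbrk K W U :=
  lbrk_le_iff.2 fun _ hu _ hw => by
    rw [← lie_skew]
    exact Submodule.neg_mem _ (lie_mem_lbrk hw hu)

lemma lbrk_comm (U W : Submodule K G) : lbrk K U W = lbrk K W U :=
  le_antisymm (lbrk_le_lbrk_swap U W) (lbrk_le_lbrk_swap W U)

lemma lbrk_span_le {s : Set G} {W X : Submodule K G} (h : ∀ u ∈ s, ∀ w ∈ W, ⁅u, w⁆ ∈ X) :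
    lbrk K (Submodule.span K s) W ≤ X := by
  refine lbrk_le_iff.2 fun u hu w hw => ?_
  induction hu using Submodule.span_induction with
  | mem z hz => exact h z hz w hw
  | zero => simp only [zero_lie, X.zero_mem]
  | add a b _ _ ha hb => rw [add_lie]; exact X.add_mem ha hb
  | smul c a _ ha => rw [smul_lie]; exact X.smul_mem c ha

/-- Jacobi: `⁅⁅a, b⁆, w⁆ = ⁅a, ⁅b, w⁆⁆ - ⁅b, ⁅a, w⁆⁆`. -/
lemma lbrk_lbrk_le (U W : Submodule K G) : lbrk K (lbrk K U U) W ≤ lbrk K U (lbrk K U W) :=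
  lbrk_span_le <| by
    rintro _ ⟨a, ha, b, hb, rfl⟩ w hw
    rw [lie_lie]
    exact Submodule.sub_mem _ (lie_mem_lbrk ha (lie_mem_lbrk hb hw))
      (lie_mem_lbrk hb (lie_mem_lbrk ha hw))

end Lbrk

open LieAlgebra Set

lemma LinearMap.trace_eq_zero_of_mapsTo_of_isCompl {K V : Type*} [Field K]
    [AddCommGroup V] [Module K V] [FiniteDimensional K V] {B M : Submodule K V} (h : IsCompl B M)
    {f : Module.End K V} (hB : MapsTo f B M) (hM : MapsTo f M B) :
    trace K V f = 0 := by
  let N : Bool → Submodule K V := fun i => bif i then B else M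
  have hN : DirectSum.IsInternal N :=
    (DirectSum.isInternal_submodule_iff_isCompl N (i := true) (j := false) (by decide)
      (by ext i; cases i <;> simp)).2 h
  exact trace_eq_zero_of_mapsTo_ne hN not (by simp) (by rintro (_ | _) <;> assumption)

lemma killingForm_eq_zero_of_isCompl {K L : Type*} [Field K] [LieRing L] [LieAlgebra K L]
    [FiniteDimensional K L] {B M : Submodule K L} (h : IsCompl B M) {x y : L}
    (hxB : MapsTo (ad K L x) B M) (hxM : MapsTo (ad K L x) M B)
    (hyB : MapsTo (ad K L y) B B) (hyM : MapsTo (ad K L y) M M) :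
    killingForm K L x y = 0 := by
  rw [killingForm_apply_apply]
  exact LinearMap.trace_eq_zero_of_mapsTo_of_isCompl h (hxB.comp hyB) (hxM.comp hyM)

namespace IsEnvPair

variable {K} {B : Submodule K G} (hpair : IsEnvPair K B)
include hpair

lemma isCompl : IsCompl B (lbrk K B B) :=
  ⟨disjoint_iff.2 hpair.2.1, codisjoint_iff.2 hpair.1⟩

lemma lbrk_lbrk_le_right : lbrk K B (lbrk K B B) ≤ B := hpair.2.2

lemma lbrk_lbrk_le_left : lbrk K (lbrk K B B) B ≤ B :=
  lbrk_comm (K := K) B (lbrk K B B) ▸ hpair.lbrk_lbrk_le_right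

lemma lbrk_lbrk_self_le : lbrk K (lbrk K B B) (lbrk K B B) ≤ lbrk K B B :=
  (lbrk_lbrk_le B _).trans (lbrk_mono le_rfl hpair.lbrk_lbrk_le_right)

lemma killingForm_eq_zero [FiniteDimensional K G] {ξ m : G} (hξ : ξ ∈ B)
    (hm : m ∈ lbrk K B B) : killingForm K G ξ m = 0 :=
  killingForm_eq_zero_of_isCompl hpair.isCompl
    (fun _ hb => lie_mem_lbrk hξ hb)
    (fun _ hn => hpair.lbrk_lbrk_le_right (lie_mem_lbrk hξ hn))
    (fun _ hb => hpair.lbrk_lbrk_le_left (lie_mem_lbrk hm hb))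
    (fun _ hn => hpair.lbrk_lbrk_self_le (lie_mem_lbrk hm hn))

end IsEnvPair

theorem killingRicci_nondegenerate_of_killing_nondegenerate
    [FiniteDimensional K G]
    (B : Submodule K G) (hpair : IsEnvPair K B)
    (hκ : ∀ x : G, (∀ y : G, killingForm K G x y = 0) → x = 0) :
    ∀ ξ ∈ B, (∀ η ∈ B, killingForm K G ξ η = 0) → ξ = 0 := by
  intro ξ hξ hβ
  refine hκ ξ fun y => ?_
  have hy : y ∈ B ⊔ lbrk K B B := hpair.1 ▸ Submodule.mem_top
  obtain ⟨b, hb, m, hm, rfl⟩ := Submodule.mem_sup.1 hy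
  rw [map_add, hβ b hb, hpair.killingForm_eq_zero hξ hm, add_zero]
end
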